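/- Let X = (Λ(φ)/√a)∂_a - (4/a^{3/2})grad_𝒢Λ + Y be a vector field on ℝ_{>0} × M, where Λ ∈ C^∞(M,ℝ) satisfies Hess_𝒢(Λ) = (3/8)𝒢Λ and ⟨dV,dΛ⟩_𝒢 = (3/4)VΛ, and Y is a Killing field of 𝒢 with Y(V) = 0. Then the first prolongation X¹ of X annihilates the minisuperspace Lagrangian L = a³(-3(ȧ/a)² + ½‖φ̇‖²_𝒢 - V(φ)), i.e. ℒ_{X¹}(L) = 0. -/

import Mathlib

/-- Partial derivative ∂_i f at x. -/
noncomputable def pd {n : ℕ} (i : Fin n) (f : (Fin n → ℝ) → ℝ) (x : Fin n → ℝ) : ℝ :=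
  fderiv ℝ f x (Pi.single i 1)

variable {n : ℕ} {i j : Fin n} {f h : (Fin n → ℝ) → ℝ} {x : Fin n → ℝ} {c : ℝ}

theorem pd_congr (e : ∀ y, f y = h y) : pd i f x = pd i h x := by
  unfold pd; congr 1; exact funext e ▸ rfl

theorem pd_const : pd i (fun _ => c) x = 0 := by simp [pd]

theorem pd_add (hf : DifferentiableAt ℝ f x) (hh : DifferentiableAt ℝ h x) :
    pd i (fun y => f y + h y) x = pd i f x + pd i h x := by
  simp [pd, fderiv_fun_add hf hh]

theorem pd_sub (hf : DifferentiableAt ℝ f x) (hh : DifferentiableAt ℝ h x) :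
    pd i (fun y => f y - h y) x = pd i f x - pd i h x := by
  simp [pd, fderiv_fun_sub hf hh]

theorem pd_mul (hf : DifferentiableAt ℝ f x) (hh : DifferentiableAt ℝ h x) :
    pd i (fun y => f y * h y) x = pd i f x * h x + f x * pd i h x := by
  simp [pd, fderiv_fun_mul hf hh]; ring

theorem pd_const_mul (hf : DifferentiableAt ℝ f x) :
    pd i (fun y => c * f y) x = c * pd i f x := by
  simp [pd, fderiv_const_mul hf]

theorem pd_sum {ι : Type*} (u : Finset ι) (F : ι → (Fin n → ℝ) → ℝ)
    (hF : ∀ j ∈ u, DifferentiableAt ℝ (F j) x) :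
    pd i (fun y => ∑ j ∈ u, F j y) x = ∑ j ∈ u, pd i (F j) x := by
  simp [pd, fderiv_fun_sum hF]

theorem pd_coord : pd i (fun y : Fin n → ℝ => y j) x = if j = i then 1 else 0 := by
  have : (fun y : Fin n → ℝ => y j) = (ContinuousLinearMap.proj j : (Fin n → ℝ) →L[ℝ] ℝ) := rfl
  rw [pd, this, ContinuousLinearMap.fderiv]
  simp [Pi.single_apply]

theorem contDiff_pd (hf : ContDiff ℝ (⊤ : ℕ∞) f) : ContDiff ℝ (⊤ : ℕ∞) (pd i f) := by
  have h1 : ContDiff ℝ (⊤ : ℕ∞) (fderiv ℝ f) := hf.fderiv_right (by simp)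
  exact h1.clm_apply contDiff_const

open Finset Matrix in
theorem contDiff_det {A : (Fin n → ℝ) → Matrix (Fin n) (Fin n) ℝ}
    (hA : ∀ i j, ContDiff ℝ (⊤ : ℕ∞) fun x => A x i j) :
    ContDiff ℝ (⊤ : ℕ∞) fun x => (A x).det := by
  have e : (fun x => (A x).det)
      = fun x => ∑ σ : Equiv.Perm (Fin n), ((Equiv.Perm.sign σ : ℤ) : ℝ) * ∏ i, A x (σ i) i := by
    funext x; rw [Matrix.det_apply']
  rw [e]
  exact ContDiff.sum fun σ _ =>
    (contDiff_const.mul (contDiff_prod fun i _ => hA (σ i) i))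

open Finset Matrix in
theorem ginv_facts {g ginv : (Fin n → ℝ) → Matrix (Fin n) (Fin n) ℝ}
    (hg : ∀ i j, ContDiff ℝ (⊤ : ℕ∞) fun x => g x i j)
    (hsym : ∀ x i j, g x i j = g x j i)
    (hinv : ∀ x i j, (∑ k, ginv x i k * g x k j) = if i = j then (1:ℝ) else 0) :
    (∀ x i j, (∑ k, g x i k * ginv x k j) = if i = j then (1:ℝ) else 0)
      ∧ (∀ x i j, ginv x i j = ginv x j i)
      ∧ (∀ i j, ContDiff ℝ (⊤ : ℕ∞) fun x => ginv x i j) := by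
  have hM : ∀ x, ginv x * g x = 1 := by
    intro x; ext i j; simp [Matrix.mul_apply, hinv x i j, Matrix.one_apply]
  have hdet : ∀ x, (g x).det ≠ 0 := fun x => det_ne_zero_of_left_inverse (hM x)
  have heq : ∀ x, ginv x = (g x)⁻¹ := fun x => (inv_eq_left_inv (hM x)).symm
  have hMr : ∀ x, g x * ginv x = 1 := fun x => mul_eq_one_comm.mp (hM x)
  have hright : ∀ x i j, (∑ k, g x i k * ginv x k j) = if i = j then (1:ℝ) else 0 := by
    intro x i j
    have h2 : (g x * ginv x) i j = (1 : Matrix (Fin n) (Fin n) ℝ) i j := by rw [hMr x]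
    simpa [Matrix.mul_apply, Matrix.one_apply] using h2
  have hgT : ∀ x, (g x)ᵀ = g x := by
    intro x; ext i j; exact hsym x j i
  have hginvsym : ∀ x i j, ginv x i j = ginv x j i := by
    intro x i j
    calc ginv x i j = (g x)⁻¹ i j := by rw [heq]
      _ = ((g x)⁻¹)ᵀ j i := rfl
      _ = ((g x)ᵀ)⁻¹ j i := by rw [Matrix.transpose_nonsing_inv]
      _ = (g x)⁻¹ j i := by rw [hgT]
      _ = ginv x j i := by rw [heq]
  refine ⟨hright, hginvsym, fun i j => ?_⟩
  have e : (fun x => ginv x i j)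
      = fun x => ((g x).det)⁻¹ * ((g x).updateRow j (Pi.single i 1)).det := by
    funext x
    rw [heq x, Matrix.inv_def, Matrix.smul_apply, Ring.inverse_eq_inv, ← adjugate_apply,
      smul_eq_mul]
  rw [e]
  refine ((contDiff_det hg).inv hdet).mul (contDiff_det fun k l => ?_)
  have e2 : (fun x => ((g x).updateRow j (Pi.single i 1)) k l)
      = fun x => if k = j then (if l = i then (1:ℝ) else 0) else g x k l := by
    funext x; simp [Matrix.updateRow_apply, Pi.single_apply]
  rw [e2]
  by_cases hk : k = j
  · simp only [hk, if_true]; exact contDiff_const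
  · simp only [hk, if_false]; exact hg k l

open Finset

theorem sum3_rotate (f : Fin n → Fin n → Fin n → ℝ) :
    ∑ i, ∑ j, ∑ k, f i j k = ∑ j, ∑ k, ∑ i, f i j k := by
  rw [Finset.sum_comm]
  exact Finset.sum_congr rfl fun j _ => Finset.sum_comm

theorem sum_antisym {A : Fin n → Fin n → ℝ} (h : ∀ j k, A j k = -A k j) :
    (∑ j, ∑ k, A j k) = 0 := by
  have h1 : (∑ j, ∑ k, A j k) = -(∑ j, ∑ k, A j k) := by
    conv_lhs => rw [Finset.sum_comm]
    calc (∑ k, ∑ j, A j k) = ∑ k, ∑ j, -(A k j) := by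
          exact Finset.sum_congr rfl fun k _ => Finset.sum_congr rfl fun j _ => h j k ▸ rfl
      _ = -(∑ j, ∑ k, A j k) := by simp
  linarith

theorem killing_contract (Yv φd : Fin n → ℝ) (gM : Matrix (Fin n) (Fin n) ℝ)
    (Gd : Fin n → Fin n → Fin n → ℝ) (Yd : Fin n → Fin n → ℝ)
    (gsym : ∀ a b, gM a b = gM b a)
    (hI3 : ∀ j k, (∑ l, Yv l * Gd l j k) + (∑ l, gM k l * Yd j l) + (∑ l, gM j l * Yd k l) = 0) :
    ∑ i, Yv i * (∑ j, ∑ k, Gd i j k * φd j * φd k)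
      = -(2 * ∑ i, (∑ j, Yd j i * φd j) * (∑ k, gM i k * φd k)) := by
  have e1 : ∑ i, Yv i * (∑ j, ∑ k, Gd i j k * φd j * φd k)
      = ∑ j, ∑ k, (∑ i, Yv i * Gd i j k) * (φd j * φd k) := by
    simp only [Finset.mul_sum]
    rw [sum3_rotate fun i j k => Yv i * (Gd i j k * φd j * φd k)]
    refine Finset.sum_congr rfl fun j _ => Finset.sum_congr rfl fun k _ => ?_
    rw [Finset.sum_mul]
    exact Finset.sum_congr rfl fun i _ => by ring
  have e3 : (∑ j, ∑ k, (∑ l, gM j l * Yd k l) * (φd j * φd k))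
      = ∑ j, ∑ k, (∑ l, gM k l * Yd j l) * (φd j * φd k) := by
    rw [Finset.sum_comm]
    exact Finset.sum_congr rfl fun j _ => Finset.sum_congr rfl fun k _ => by ring
  have e2 : ∀ j k, (∑ i, Yv i * Gd i j k)
      = -((∑ l, gM k l * Yd j l) + (∑ l, gM j l * Yd k l)) := fun j k => by
    have := hI3 j k; linarith
  have e4 : (∑ j, ∑ k, (∑ l, gM k l * Yd j l) * (φd j * φd k))
      = ∑ i, (∑ j, Yd j i * φd j) * (∑ k, gM i k * φd k) := by
    simp only [Finset.sum_mul, Finset.mul_sum]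
    rw [sum3_rotate fun j k l => gM k l * Yd j l * (φd j * φd k)]
    rw [sum3_rotate fun k l j => gM k l * Yd j l * (φd j * φd k)]
    refine Finset.sum_congr rfl fun l _ => ?_
    rw [Finset.sum_comm]
    exact Finset.sum_congr rfl fun j _ => Finset.sum_congr rfl fun k _ => by
      rw [gsym j l]; ring
  rw [e1]
  calc (∑ j, ∑ k, (∑ i, Yv i * Gd i j k) * (φd j * φd k))
      = ∑ j, ∑ k, (-((∑ l, gM k l * Yd j l) * (φd j * φd k))
          + -((∑ l, gM j l * Yd k l) * (φd j * φd k))) := by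
        refine Finset.sum_congr rfl fun j _ => Finset.sum_congr rfl fun k _ => ?_
        rw [e2 j k]; ring
    _ = -(∑ j, ∑ k, (∑ l, gM k l * Yd j l) * (φd j * φd k))
          + -(∑ j, ∑ k, (∑ l, gM j l * Yd k l) * (φd j * φd k)) := by
        simp [Finset.sum_add_distrib]
    _ = -(2 * ∑ i, (∑ j, Yd j i * φd j) * (∑ k, gM i k * φd k)) := by
        rw [e3, e4]; ring

theorem hess_contract (φd GLv : Fin n → ℝ) (Λv : ℝ) (gM : Matrix (Fin n) (Fin n) ℝ)
    (Gd : Fin n → Fin n → Fin n → ℝ) (Wd : Fin n → Fin n → ℝ)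
    (gsym : ∀ a b, gM a b = gM b a)
    (hGd23 : ∀ l a b, Gd l a b = Gd l b a)
    (hI4 : ∀ j k, (∑ i, gM k i * Wd i j)
        = (3/8) * gM j k * Λv
          + ∑ l, ((1/2)*(Gd j l k + Gd k l j - Gd l j k) - Gd j k l) * GLv l) :
    ∑ i, (∑ j, Wd i j * φd j) * (∑ k, gM i k * φd k)
      = (3/8)*Λv*(∑ j, ∑ k, gM j k * φd j * φd k)
        - (1/2) * ∑ i, GLv i * (∑ j, ∑ k, Gd i j k * φd j * φd k) := by
  have eA : ∑ i, (∑ j, Wd i j * φd j) * (∑ k, gM i k * φd k)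
      = ∑ j, ∑ k, (∑ i, gM k i * Wd i j) * (φd j * φd k) := by
    simp only [Finset.sum_mul, Finset.mul_sum]
    rw [sum3_rotate fun i k j => Wd i j * φd j * (gM i k * φd k)]
    rw [Finset.sum_comm]
    exact Finset.sum_congr rfl fun j _ => Finset.sum_congr rfl fun k _ =>
      Finset.sum_congr rfl fun i _ => by rw [gsym i k]; ring
  have eB : ∑ j, ∑ k, ((3/8) * gM j k * Λv) * (φd j * φd k)
      = (3/8)*Λv*(∑ j, ∑ k, gM j k * φd j * φd k) := by
    simp only [Finset.mul_sum]
    exact Finset.sum_congr rfl fun j _ => Finset.sum_congr rfl fun k _ => by ring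
  have eC : ∑ j, ∑ k, (∑ l, ((1/2)*(Gd k l j - Gd j l k)) * GLv l) * (φd j * φd k) = 0 := by
    refine sum_antisym fun j k => ?_
    have : (∑ l, ((1/2)*(Gd k l j - Gd j l k)) * GLv l)
        = -(∑ l, ((1/2)*(Gd j l k - Gd k l j)) * GLv l) := by
      rw [← Finset.sum_neg_distrib]
      exact Finset.sum_congr rfl fun l _ => by ring
    rw [this]; ring
  have eD : ∑ j, ∑ k, (∑ l, (-(1/2) * Gd l j k) * GLv l) * (φd j * φd k)
      = -(1/2) * ∑ i, GLv i * (∑ j, ∑ k, Gd i j k * φd j * φd k) := by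
    simp only [Finset.sum_mul, Finset.mul_sum]
    rw [sum3_rotate fun j k l => -(1/2) * Gd l j k * GLv l * (φd j * φd k)]
    rw [sum3_rotate fun k l j => -(1/2) * Gd l j k * GLv l * (φd j * φd k)]
    exact Finset.sum_congr rfl fun l _ => Finset.sum_congr rfl fun j _ =>
      Finset.sum_congr rfl fun k _ => by ring
  calc ∑ i, (∑ j, Wd i j * φd j) * (∑ k, gM i k * φd k)
      = ∑ j, ∑ k, (((3/8) * gM j k * Λv) * (φd j * φd k)
          + ((∑ l, ((1/2)*(Gd k l j - Gd j l k)) * GLv l) * (φd j * φd k)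
            + (∑ l, (-(1/2) * Gd l j k) * GLv l) * (φd j * φd k))) := by
        rw [eA]
        refine Finset.sum_congr rfl fun j _ => Finset.sum_congr rfl fun k _ => ?_
        rw [hI4 j k]
        have : (∑ l, ((1/2)*(Gd j l k + Gd k l j - Gd l j k) - Gd j k l) * GLv l)
            = (∑ l, ((1/2)*(Gd k l j - Gd j l k)) * GLv l)
              + (∑ l, (-(1/2) * Gd l j k) * GLv l) := by
          rw [← Finset.sum_add_distrib]
          refine Finset.sum_congr rfl fun l _ => ?_
          rw [hGd23 j k l]; ring
        rw [this]; ring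
    _ = (3/8)*Λv*(∑ j, ∑ k, gM j k * φd j * φd k)
        - (1/2) * ∑ i, GLv i * (∑ j, ∑ k, Gd i j k * φd j * φd k) := by
        simp only [Finset.sum_add_distrib]
        rw [eB, eC, eD]; ring

theorem delta_contract (P φd : Fin n → ℝ) (gM ginvM : Matrix (Fin n) (Fin n) ℝ)
    (hδ : ∀ j k, (∑ i, ginvM i j * gM i k) = if j = k then (1:ℝ) else 0) :
    ∑ i, (∑ j, ginvM i j * P j) * (∑ k, gM i k * φd k) = ∑ j, P j * φd j := by
  calc ∑ i, (∑ j, ginvM i j * P j) * (∑ k, gM i k * φd k)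
      = ∑ j, ∑ k, (∑ i, ginvM i j * gM i k) * (P j * φd k) := by
        simp only [Finset.sum_mul, Finset.mul_sum]
        rw [sum3_rotate fun i k j => ginvM i j * P j * (gM i k * φd k)]
        rw [Finset.sum_comm]
        exact Finset.sum_congr rfl fun j _ => Finset.sum_congr rfl fun k _ =>
          Finset.sum_congr rfl fun i _ => by ring
    _ = ∑ j, P j * φd j := by
        refine Finset.sum_congr rfl fun j _ => ?_
        rw [Finset.sum_congr rfl (fun k (_ : k ∈ univ) => by rw [hδ j k])]
        simp [ite_mul, Finset.sum_ite_eq]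

theorem sum_expandT2 (c A : ℝ) (Yv GLv SG Vd : Fin n → ℝ) :
    ∑ i, (Yv i - c * GLv i) * (A * ((1/2) * SG i - Vd i))
      = A*((1/2)*(∑ i, Yv i * SG i) - ∑ i, Yv i * Vd i)
        - c*A*((1/2)*(∑ i, GLv i * SG i) - ∑ i, GLv i * Vd i) := by
  have h2 : ∀ x ∈ (univ : Finset (Fin n)), (Yv x - c * GLv x) * (A * ((1/2) * SG x - Vd x))
      = A/2*(Yv x * SG x) - A*(Yv x * Vd x) - c*A/2*(GLv x * SG x) + c*A*(GLv x * Vd x) :=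
    fun x _ => by ring
  rw [Finset.sum_congr rfl h2]
  simp only [Finset.sum_add_distrib, Finset.sum_sub_distrib, ← Finset.mul_sum]
  ring

theorem sum_expandT4 (c6 c A ad : ℝ) (GLv GK φd : Fin n → ℝ) (Yd Wd : Fin n → Fin n → ℝ) :
    ∑ i, (c6 * GLv i * ad + (∑ j, (Yd j i - c * Wd i j) * φd j)) * (A * GK i)
      = c6*ad*A*(∑ i, GLv i * GK i) + A*(∑ i, (∑ j, Yd j i * φd j) * GK i)
        - c*A*(∑ i, (∑ j, Wd i j * φd j) * GK i) := by
  have h1 : ∀ i, (∑ j, (Yd j i - c * Wd i j) * φd j)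
      = (∑ j, Yd j i * φd j) - c * (∑ j, Wd i j * φd j) := by
    intro i; rw [Finset.mul_sum, ← Finset.sum_sub_distrib]
    exact Finset.sum_congr rfl fun j _ => by ring
  have h2 : ∀ x ∈ (univ : Finset (Fin n)),
      (c6 * GLv x * ad + (∑ j, (Yd j x - c * Wd x j) * φd j)) * (A * GK x)
      = c6*ad*A*(GLv x * GK x) + A*((∑ j, Yd j x * φd j) * GK x)
        - c*A*((∑ j, Wd x j * φd j) * GK x) := fun x _ => by rw [h1]; ring
  rw [Finset.sum_congr rfl h2]
  simp only [Finset.sum_add_distrib, Finset.sum_sub_distrib, ← Finset.mul_sum]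

theorem sum_div_mul (c : ℝ) (f φd : Fin n → ℝ) :
    ∑ i, f i / c * φd i = (1/c) * ∑ i, f i * φd i := by
  rw [Finset.mul_sum]
  exact Finset.sum_congr rfl fun i _ => by ring

theorem pd_mul_const (hf : DifferentiableAt ℝ f x) (c : ℝ) :
    pd i (fun y => f y * c) x = pd i f x * c := by
  have e : (fun y => f y * c) = (fun y => c * f y) := funext fun y => mul_comm _ _
  rw [e, pd_const_mul hf, mul_comm]

open Finset in
/-- Christoffel symbols Γ^i_{jk} of the Levi-Civita connection of the metric g
(with inverse ginv), in local coordinates. -/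
noncomputable def Gamma {n : ℕ} (g ginv : (Fin n → ℝ) → Matrix (Fin n) (Fin n) ℝ)
    (x : Fin n → ℝ) (i j k : Fin n) : ℝ :=
  (1 / 2) * ∑ l, ginv x i l *
    (pd j (fun y => g y l k) x + pd k (fun y => g y l j) x - pd l (fun y => g y j k) x)

open Finset in
/-- The minisuperspace Lagrangian L(a,ȧ,φ,φ̇) = a³(-3(ȧ/a)² + ½𝒢_{ij}φ̇ⁱφ̇ʲ - V(φ)). -/
noncomputable def minisuperL {n : ℕ} (g : (Fin n → ℝ) → Matrix (Fin n) (Fin n) ℝ)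
    (V : (Fin n → ℝ) → ℝ) (a ad : ℝ) (φ φd : Fin n → ℝ) : ℝ :=
  a ^ 3 * (-3 * (ad / a) ^ 2 + (1 / 2) * ∑ i, ∑ j, g φ i j * φd i * φd j - V φ)

open Finset in
/-- The lowered covariant derivative ∇_i Y_j of a vector field Y. -/
noncomputable def covDlow {n : ℕ} (g ginv : (Fin n → ℝ) → Matrix (Fin n) (Fin n) ℝ)
    (Y : (Fin n → ℝ) → Fin n → ℝ) (x : Fin n → ℝ) (i j : Fin n) : ℝ :=
  pd i (fun y => ∑ k, g y j k * Y y k) x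
    - ∑ k, Gamma g ginv x k i j * (∑ l, g x k l * Y x l)

/-- The a-component X^a = Λ(φ)/√a of the Noether symmetry generator. -/
noncomputable def Xa {n : ℕ} (Λ : (Fin n → ℝ) → ℝ) (a : ℝ) (φ : Fin n → ℝ) : ℝ :=
  Λ φ / Real.sqrt a

open Finset in
/-- The M-component Xⁱ = Yⁱ(φ) - (4/a^{3/2})(grad_𝒢Λ)ⁱ(φ) of the Noether symmetry
generator. -/
noncomputable def Xc {n : ℕ} (ginv : (Fin n → ℝ) → Matrix (Fin n) (Fin n) ℝ)
    (Λ : (Fin n → ℝ) → ℝ) (Y : (Fin n → ℝ) → Fin n → ℝ)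
    (a : ℝ) (φ : Fin n → ℝ) (i : Fin n) : ℝ :=
  Y φ i - (4 / Real.sqrt a ^ 3) * ∑ j, ginv φ i j * pd j Λ φ

open Finset in
/-- if Λ satisfies Hess_𝒢(Λ) = (3/8)𝒢Λ and ⟨dV,dΛ⟩_𝒢 = (3/4)VΛ and Y is a
Killing field of 𝒢 with Y(V) = 0, then the first prolongation of the vector field
X = (Λ(φ)/√a)∂_a - (4/a^{3/2})grad_𝒢Λ + Y annihilates the minisuperspace Lagrangian:
X^a ∂L/∂a + Xⁱ ∂L/∂φⁱ + Ẋ^a ∂L/∂ȧ + Ẋⁱ ∂L/∂φ̇ⁱ = 0 identically in (a,ȧ,φ,φ̇),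
where Ẋ^a = (∂X^a/∂a)ȧ + (∂X^a/∂φⁱ)φ̇ⁱ and similarly for Ẋⁱ. -/
theorem noether_symmetry_condition {n : ℕ}
    (g ginv : (Fin n → ℝ) → Matrix (Fin n) (Fin n) ℝ)
    (hg : ∀ i j, ContDiff ℝ (⊤ : ℕ∞) (fun x => g x i j))
    (hsym : ∀ x i j, g x i j = g x j i)
    (hinv : ∀ x i j, (∑ k, ginv x i k * g x k j) = if i = j then (1:ℝ) else 0)
    (hpos : ∀ (x : Fin n → ℝ) (v : Fin n → ℝ), v ≠ 0 → 0 < ∑ i, ∑ j, g x i j * v i * v j)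
    (V Λ : (Fin n → ℝ) → ℝ) (hV : ContDiff ℝ (⊤ : ℕ∞) V) (hΛ : ContDiff ℝ (⊤ : ℕ∞) Λ)
    (Y : (Fin n → ℝ) → Fin n → ℝ) (hY : ∀ i, ContDiff ℝ (⊤ : ℕ∞) (fun x => Y x i))
    (hHesse : ∀ x i j, pd i (fun y => pd j Λ y) x - (∑ k, Gamma g ginv x k i j * pd k Λ x)
        = (3 / 8) * g x i j * Λ x)
    (hContr : ∀ x, (∑ i, ∑ j, ginv x i j * pd i V x * pd j Λ x) = (3 / 4) * V x * Λ x)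
    (hKill : ∀ x i j, covDlow g ginv Y x i j + covDlow g ginv Y x j i = 0)
    (hYV : ∀ x, (∑ i, Y x i * pd i V x) = 0) :
    ∀ (a ad : ℝ), 0 < a → ∀ (φ φd : Fin n → ℝ),
      Xa Λ a φ * deriv (fun s => minisuperL g V s ad φ φd) a
      + (∑ i, Xc ginv Λ Y a φ i * pd i (fun y => minisuperL g V a ad y φd) φ)
      + (deriv (fun s => Xa Λ s φ) a * ad + ∑ i, pd i (fun y => Xa Λ a y) φ * φd i)
          * deriv (fun s => minisuperL g V a s φ φd) ad
      + (∑ i, (deriv (fun s => Xc ginv Λ Y s φ i) a * ad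
            + ∑ j, pd j (fun y => Xc ginv Λ Y a y i) φ * φd j)
          * pd i (fun v => minisuperL g V a ad φ v) φd) = 0 := by
  intro a ad ha φ φd
  obtain ⟨hright, hgis, hginvCD⟩ := ginv_facts hg hsym hinv
  have ha0 : a ≠ 0 := ne_of_gt ha
  have hsa : 0 < Real.sqrt a := Real.sqrt_pos.mpr ha
  have hsa0 : Real.sqrt a ≠ 0 := ne_of_gt hsa
  -- differentiability facts
  have dG : ∀ (x : Fin n → ℝ) (i j : Fin n), DifferentiableAt ℝ (fun y => g y i j) x :=
    fun x i j => ((hg i j).differentiable (by simp)).differentiableAt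
  have dV : ∀ x, DifferentiableAt ℝ V x :=
    fun x => (hV.differentiable (by simp)).differentiableAt
  have dΛ : ∀ x, DifferentiableAt ℝ Λ x :=
    fun x => (hΛ.differentiable (by simp)).differentiableAt
  have dY : ∀ (x : Fin n → ℝ) (i : Fin n), DifferentiableAt ℝ (fun y => Y y i) x :=
    fun x i => ((hY i).differentiable (by simp)).differentiableAt
  have dP : ∀ (x : Fin n → ℝ) (k : Fin n), DifferentiableAt ℝ (pd k Λ) x :=
    fun x k => ((contDiff_pd hΛ).differentiable (by simp)).differentiableAt
  have dGi : ∀ (x : Fin n → ℝ) (i j : Fin n), DifferentiableAt ℝ (fun y => ginv y i j) x :=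
    fun x i j => ((hginvCD i j).differentiable (by simp)).differentiableAt
  have dGL : ∀ (x : Fin n → ℝ) (i : Fin n),
      DifferentiableAt ℝ (fun y => ∑ m, ginv y i m * pd m Λ y) x :=
    fun x i => DifferentiableAt.fun_sum fun m _ => (dGi x i m).mul (dP x m)
  -- symmetry of pd of g
  have hGd23 : ∀ (l i j : Fin n), pd l (fun y => g y i j) φ = pd l (fun y => g y j i) φ :=
    fun l i j => pd_congr fun y => hsym y i j
  -- lowered Christoffel symbols
  have hlow : ∀ l i j : Fin n, (∑ k, g φ l k * Gamma g ginv φ k i j)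
      = (1/2)*(pd i (fun y => g y l j) φ + pd j (fun y => g y l i) φ
          - pd l (fun y => g y i j) φ) := by
    intro l i j
    calc ∑ k, g φ l k * Gamma g ginv φ k i j
        = ∑ m, (∑ k, g φ l k * ginv φ k m)
            * ((1/2) * (pd i (fun y => g y m j) φ + pd j (fun y => g y m i) φ
                - pd m (fun y => g y i j) φ)) := by
          simp only [Gamma, Finset.mul_sum]
          rw [Finset.sum_comm]
          refine Finset.sum_congr rfl fun m _ => ?_
          rw [Finset.sum_mul]
          exact Finset.sum_congr rfl fun k _ => by ring
      _ = (1/2)*(pd i (fun y => g y l j) φ + pd j (fun y => g y l i) φ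
            - pd l (fun y => g y i j) φ) := by
          rw [Finset.sum_congr rfl fun m (_ : m ∈ univ) => by rw [hright φ l m]]
          simp [ite_mul, Finset.sum_ite_eq]
  -- expanded Killing equation
  have hKillExp : ∀ j k : Fin n,
      (∑ l, Y φ l * pd l (fun y => g y j k) φ)
      + (∑ l, g φ k l * pd j (fun y => Y y l) φ)
      + (∑ l, g φ j l * pd k (fun y => Y y l) φ) = 0 := by
    intro j k
    have hc : ∀ p q : Fin n, covDlow g ginv Y φ p q
        = (∑ m, pd p (fun y => g y q m) φ * Y φ m)
          + (∑ m, g φ q m * pd p (fun y => Y y m) φ)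
          - ((1/2)*(∑ m, pd p (fun y => g y m q) φ * Y φ m)
            + (1/2)*(∑ m, pd q (fun y => g y m p) φ * Y φ m)
            - (1/2)*(∑ m, pd m (fun y => g y p q) φ * Y φ m)) := by
      intro p q
      have h1 : pd p (fun y => ∑ m, g y q m * Y y m) φ
          = ∑ m, (pd p (fun y => g y q m) φ * Y φ m + g φ q m * pd p (fun y => Y y m) φ) := by
        refine (pd_sum univ _ (fun m _ => (dG φ q m).mul (dY φ m))).trans ?_
        exact Finset.sum_congr rfl fun m _ => pd_mul (dG φ q m) (dY φ m)
      have h2 : ∑ m, Gamma g ginv φ m p q * (∑ l, g φ m l * Y φ l)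
          = ∑ l, ((1/2)*(pd p (fun y => g y l q) φ + pd q (fun y => g y l p) φ
              - pd l (fun y => g y p q) φ)) * Y φ l := by
        calc ∑ m, Gamma g ginv φ m p q * (∑ l, g φ m l * Y φ l)
            = ∑ l, (∑ m, g φ l m * Gamma g ginv φ m p q) * Y φ l := by
              simp only [Finset.mul_sum, Finset.sum_mul]
              rw [Finset.sum_comm]
              exact Finset.sum_congr rfl fun l _ => Finset.sum_congr rfl fun m _ => by
                rw [hsym φ m l]; ring
          _ = ∑ l, ((1/2)*(pd p (fun y => g y l q) φ + pd q (fun y => g y l p) φ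
                - pd l (fun y => g y p q) φ)) * Y φ l :=
              Finset.sum_congr rfl fun l _ => by rw [hlow l p q]
      have h3 : ∑ l, ((1/2)*(pd p (fun y => g y l q) φ + pd q (fun y => g y l p) φ
              - pd l (fun y => g y p q) φ)) * Y φ l
          = (1/2)*(∑ m, pd p (fun y => g y m q) φ * Y φ m)
            + (1/2)*(∑ m, pd q (fun y => g y m p) φ * Y φ m)
            - (1/2)*(∑ m, pd m (fun y => g y p q) φ * Y φ m) := by
        simp only [Finset.mul_sum]
        rw [← Finset.sum_add_distrib, ← Finset.sum_sub_distrib]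
        exact Finset.sum_congr rfl fun m _ => by ring
      simp only [covDlow]
      rw [h1, h2, h3, Finset.sum_add_distrib]
    have hk := hKill φ j k
    rw [hc j k, hc k j] at hk
    have hA : ∑ m, pd j (fun y => g y k m) φ * Y φ m
        = ∑ m, pd j (fun y => g y m k) φ * Y φ m :=
      Finset.sum_congr rfl fun m _ => by rw [hGd23 j k m]
    have hB : ∑ m, pd k (fun y => g y j m) φ * Y φ m
        = ∑ m, pd k (fun y => g y m j) φ * Y φ m :=
      Finset.sum_congr rfl fun m _ => by rw [hGd23 k j m]
    have hC : ∑ m, pd m (fun y => g y k j) φ * Y φ m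
        = ∑ m, pd m (fun y => g y j k) φ * Y φ m :=
      Finset.sum_congr rfl fun m _ => by rw [hGd23 m k j]
    have hm1 : ∑ l, Y φ l * pd l (fun y => g y j k) φ
        = ∑ m, pd m (fun y => g y j k) φ * Y φ m :=
      Finset.sum_congr rfl fun m _ => by ring
    have hm2 : ∑ l, g φ k l * pd j (fun y => Y y l) φ
        = ∑ m, g φ k m * pd j (fun y => Y y m) φ := rfl
    rw [hA, hB, hC] at hk
    linarith [hk, hm1]
  -- expanded Hessian equation
  have hI4 : ∀ j k : Fin n,
      (∑ i, g φ k i * pd j (fun y => ∑ m, ginv y i m * pd m Λ y) φ)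
      = (3/8) * g φ j k * Λ φ
        + ∑ l, ((1/2)*(pd j (fun y => g y l k) φ + pd k (fun y => g y l j) φ
              - pd l (fun y => g y j k) φ) - pd j (fun y => g y k l) φ)
            * (∑ r, ginv φ l r * pd r Λ φ) := by
    have hfun : ∀ k0 : Fin n, (fun y => pd k0 Λ y)
        = (fun y => ∑ i, g y k0 i * (∑ m, ginv y i m * pd m Λ y)) := by
      intro k0; funext y
      have h1 : ∑ i, g y k0 i * (∑ m, ginv y i m * pd m Λ y)
          = ∑ m, (∑ i, g y k0 i * ginv y i m) * pd m Λ y := by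
        simp only [Finset.mul_sum, Finset.sum_mul]
        rw [Finset.sum_comm]
        exact Finset.sum_congr rfl fun m _ => Finset.sum_congr rfl fun i _ => by ring
      rw [h1, Finset.sum_congr rfl fun m (_ : m ∈ univ) => by rw [hright y k0 m]]
      simp [ite_mul, Finset.sum_ite_eq]
    have hpdPt : ∀ m : Fin n, pd m Λ φ
        = ∑ l, g φ m l * (∑ r, ginv φ l r * pd r Λ φ) := fun m => congrFun (hfun m) φ
    intro j k
    have hb : pd j (fun y => pd k Λ y) φ
        = ∑ i, (pd j (fun y => g y k i) φ * (∑ m, ginv φ i m * pd m Λ φ)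
              + g φ k i * pd j (fun y => ∑ m, ginv y i m * pd m Λ y) φ) := by
      rw [hfun k]
      refine (pd_sum univ _ (fun i _ => (dG φ k i).mul (dGL φ i))).trans ?_
      exact Finset.sum_congr rfl fun i _ => pd_mul (dG φ k i) (dGL φ i)
    have hGam : ∑ m, Gamma g ginv φ m j k * pd m Λ φ
        = ∑ l, ((1/2)*(pd j (fun y => g y l k) φ + pd k (fun y => g y l j) φ
            - pd l (fun y => g y j k) φ)) * (∑ r, ginv φ l r * pd r Λ φ) := by
      calc ∑ m, Gamma g ginv φ m j k * pd m Λ φ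
          = ∑ m, Gamma g ginv φ m j k * (∑ l, g φ m l * (∑ r, ginv φ l r * pd r Λ φ)) :=
            Finset.sum_congr rfl fun m _ => by rw [← hpdPt m]
        _ = ∑ l, (∑ m, g φ l m * Gamma g ginv φ m j k) * (∑ r, ginv φ l r * pd r Λ φ) := by
            simp only [Finset.mul_sum, Finset.sum_mul]
            rw [Finset.sum_comm]
            refine Finset.sum_congr rfl fun l _ => ?_
            rw [Finset.sum_comm]
            exact Finset.sum_congr rfl fun m _ => Finset.sum_congr rfl fun r _ => by
              rw [hsym φ r l]; ring
        _ = ∑ l, ((1/2)*(pd j (fun y => g y l k) φ + pd k (fun y => g y l j) φ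
              - pd l (fun y => g y j k) φ)) * (∑ r, ginv φ l r * pd r Λ φ) :=
            Finset.sum_congr rfl fun l _ => by rw [hlow l j k]
    have hh := hHesse φ j k
    have hb2 : ∑ i, g φ k i * pd j (fun y => ∑ m, ginv y i m * pd m Λ y) φ
        = pd j (fun y => pd k Λ y) φ
          - ∑ i, pd j (fun y => g y k i) φ * (∑ m, ginv φ i m * pd m Λ φ) := by
      rw [hb, Finset.sum_add_distrib]; ring
    have hcomb : ∑ l, ((1/2)*(pd j (fun y => g y l k) φ + pd k (fun y => g y l j) φ
            - pd l (fun y => g y j k) φ) - pd j (fun y => g y k l) φ)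
          * (∑ r, ginv φ l r * pd r Λ φ)
        = (∑ l, ((1/2)*(pd j (fun y => g y l k) φ + pd k (fun y => g y l j) φ
            - pd l (fun y => g y j k) φ)) * (∑ r, ginv φ l r * pd r Λ φ))
          - ∑ l, pd j (fun y => g y k l) φ * (∑ r, ginv φ l r * pd r Λ φ) := by
      rw [← Finset.sum_sub_distrib]
      exact Finset.sum_congr rfl fun l _ => by ring
    rw [hb2, hcomb, ← hGam]
    linarith [hh]
  -- the eight derivative computations
  have hD1 : deriv (fun s => minisuperL g V s ad φ φd) a
      = -3*ad^2 + 3*a^2*((1/2)*(∑ i, ∑ j, g φ i j * φd i * φd j) - V φ) := by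
    have h1 : HasDerivAt (fun s : ℝ => s) 1 a := hasDerivAt_id a
    have h3 : HasDerivAt (fun s : ℝ => s^3) (3*a^2) a := by
      simpa using hasDerivAt_pow 3 a
    have hp : HasDerivAt (fun s : ℝ => (-3*ad^2)*s
          + ((1/2)*(∑ i, ∑ j, g φ i j * φd i * φd j) - V φ)*s^3)
        (-3*ad^2 + 3*a^2*((1/2)*(∑ i, ∑ j, g φ i j * φd i * φd j) - V φ)) a := by
      have := (h1.const_mul (-3*ad^2)).add
        (h3.const_mul ((1/2)*(∑ i, ∑ j, g φ i j * φd i * φd j) - V φ))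
      refine this.congr_deriv ?_
      ring
    have heq : (fun s => minisuperL g V s ad φ φd)
        =ᶠ[nhds a] (fun s : ℝ => (-3*ad^2)*s
          + ((1/2)*(∑ i, ∑ j, g φ i j * φd i * φd j) - V φ)*s^3) := by
      filter_upwards [eventually_ne_nhds ha0] with s hs
      simp only [minisuperL]
      field_simp
      ring
    rw [heq.deriv_eq, hp.deriv]
  have hD3 : deriv (fun s => minisuperL g V a s φ φd) ad = -6*a*ad := by
    have e : (fun s => minisuperL g V a s φ φd)
        = (fun s : ℝ => (-3*a) * s^2
          + a^3*((1/2)*(∑ i, ∑ j, g φ i j * φd i * φd j) - V φ)) := by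
      funext s
      simp only [minisuperL]
      field_simp
      ring
    have hp : HasDerivAt (fun s : ℝ => (-3*a) * s^2
          + a^3*((1/2)*(∑ i, ∑ j, g φ i j * φd i * φd j) - V φ)) (-6*a*ad) ad := by
      have := ((hasDerivAt_pow 2 ad).const_mul (-3*a)).add_const
        (a^3*((1/2)*(∑ i, ∑ j, g φ i j * φd i * φd j) - V φ))
      refine this.congr_deriv ?_
      simp; ring
    rw [e, hp.deriv]
  have hD5 : deriv (fun s => Xa Λ s φ) a = Λ φ * (-(1 / (2 * Real.sqrt a)) / Real.sqrt a ^ 2) := by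
    have e : (fun s => Xa Λ s φ) = (fun s : ℝ => Λ φ * (Real.sqrt s)⁻¹) := by
      funext s; simp only [Xa]; rw [div_eq_mul_inv]
    have hp : HasDerivAt (fun s : ℝ => Λ φ * (Real.sqrt s)⁻¹)
        (Λ φ * (-(1 / (2 * Real.sqrt a)) / Real.sqrt a ^ 2)) a :=
      ((Real.hasDerivAt_sqrt ha0).inv hsa0).const_mul (Λ φ)
    rw [e, hp.deriv]
  have hD6 : ∀ i : Fin n, pd i (fun y => Xa Λ a y) φ = (Real.sqrt a)⁻¹ * pd i Λ φ := by
    intro i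
    calc pd i (fun y => Xa Λ a y) φ = pd i (fun y => (Real.sqrt a)⁻¹ * Λ y) φ :=
          pd_congr fun y => by simp only [Xa]; rw [div_eq_mul_inv]; ring
      _ = (Real.sqrt a)⁻¹ * pd i Λ φ := pd_const_mul (dΛ φ)
  have hD7 : ∀ i : Fin n, deriv (fun s => Xc ginv Λ Y s φ i) a
      = (-(4 * (-((3:ℕ) * Real.sqrt a ^ (3-1) * (1 / (2 * Real.sqrt a)))
          / (Real.sqrt a ^ 3) ^ 2))) * (∑ j, ginv φ i j * pd j Λ φ) := by
    intro i
    have e : (fun s => Xc ginv Λ Y s φ i)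
        = (fun s : ℝ => Y φ i - (4 * ∑ j, ginv φ i j * pd j Λ φ) * ((Real.sqrt s)^3)⁻¹) := by
      funext s; simp only [Xc]; ring
    have hp : HasDerivAt
        (fun s : ℝ => Y φ i - (4 * ∑ j, ginv φ i j * pd j Λ φ) * ((Real.sqrt s)^3)⁻¹)
        (-((4 * ∑ j, ginv φ i j * pd j Λ φ)
          * (-((3:ℕ) * Real.sqrt a ^ (3-1) * (1 / (2 * Real.sqrt a))) / (Real.sqrt a ^ 3) ^ 2))) a :=
      HasDerivAt.const_sub (Y φ i)
        ((((Real.hasDerivAt_sqrt ha0).pow 3).inv (pow_ne_zero 3 hsa0)).const_mul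
          (4 * ∑ j, ginv φ i j * pd j Λ φ))
    rw [e, hp.deriv]
    ring
  have hD2 : ∀ i : Fin n, pd i (fun y => minisuperL g V a ad y φd) φ
      = a^3*((1/2)*(∑ j, ∑ k, pd i (fun y => g y j k) φ * φd j * φd k) - pd i V φ) := by
    intro i
    have dsum : DifferentiableAt ℝ (fun y => ∑ j, ∑ k, g y j k * φd j * φd k) φ :=
      DifferentiableAt.fun_sum fun j _ => DifferentiableAt.fun_sum fun k _ =>
        ((dG φ j k).mul_const (φd j)).mul_const (φd k)
    have hps : pd i (fun y => ∑ j, ∑ k, g y j k * φd j * φd k) φ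
        = ∑ j, ∑ k, pd i (fun y => g y j k) φ * φd j * φd k := by
      refine (pd_sum univ _ (fun j _ => DifferentiableAt.fun_sum fun k _ =>
        ((dG φ j k).mul_const (φd j)).mul_const (φd k))).trans ?_
      refine Finset.sum_congr rfl fun j _ => ?_
      refine (pd_sum univ _ (fun k _ =>
        ((dG φ j k).mul_const (φd j)).mul_const (φd k))).trans ?_
      refine Finset.sum_congr rfl fun k _ => ?_
      rw [pd_mul_const ((dG φ j k).mul_const (φd j)) (φd k), pd_mul_const (dG φ j k) (φd j)]
    calc pd i (fun y => minisuperL g V a ad y φd) φ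
        = pd i (fun y => a^3 * ((-3*(ad/a)^2
            + (1/2)*(∑ j, ∑ k, g y j k * φd j * φd k)) - V y)) φ :=
          pd_congr fun y => by simp only [minisuperL]
      _ = a^3 * pd i (fun y => (-3*(ad/a)^2
            + (1/2)*(∑ j, ∑ k, g y j k * φd j * φd k)) - V y) φ :=
          pd_const_mul (((differentiableAt_const _).fun_add (dsum.const_mul _)).fun_sub (dV φ))
      _ = a^3 * (pd i (fun y => -3*(ad/a)^2
            + (1/2)*(∑ j, ∑ k, g y j k * φd j * φd k)) φ - pd i V φ) := by
          rw [pd_sub ((differentiableAt_const _).fun_add (dsum.const_mul _)) (dV φ)]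
      _ = a^3 * ((1/2) * pd i (fun y => ∑ j, ∑ k, g y j k * φd j * φd k) φ - pd i V φ) := by
          rw [pd_add (differentiableAt_const _) (dsum.const_mul _), pd_const, zero_add,
            pd_const_mul dsum]
      _ = a^3*((1/2)*(∑ j, ∑ k, pd i (fun y => g y j k) φ * φd j * φd k) - pd i V φ) := by
          rw [hps]
  have hD8 : ∀ (i j : Fin n), pd j (fun y => Xc ginv Λ Y a y i) φ
      = pd j (fun y => Y y i) φ
        - (4 / Real.sqrt a ^ 3) * pd j (fun y => ∑ m, ginv y i m * pd m Λ y) φ := by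
    intro i j
    calc pd j (fun y => Xc ginv Λ Y a y i) φ
        = pd j (fun y => Y y i - (4 / Real.sqrt a ^ 3) * ∑ m, ginv y i m * pd m Λ y) φ :=
          pd_congr fun y => rfl
      _ = pd j (fun y => Y y i) φ
          - pd j (fun y => (4 / Real.sqrt a ^ 3) * ∑ m, ginv y i m * pd m Λ y) φ :=
          pd_sub (dY φ i) ((dGL φ i).const_mul _)
      _ = pd j (fun y => Y y i) φ
          - (4 / Real.sqrt a ^ 3) * pd j (fun y => ∑ m, ginv y i m * pd m Λ y) φ := by
          rw [pd_const_mul (dGL φ i)]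
  have hD4 : ∀ i : Fin n, pd i (fun v => minisuperL g V a ad φ v) φd
      = a^3 * (∑ k, g φ i k * φd k) := by
    intro i
    have dcoord : ∀ (j : Fin n) (x : Fin n → ℝ),
        DifferentiableAt ℝ (fun v : Fin n → ℝ => v j) x := fun j x =>
      (ContinuousLinearMap.proj j : (Fin n → ℝ) →L[ℝ] ℝ).differentiableAt
    have dsv : DifferentiableAt ℝ (fun v : Fin n → ℝ => ∑ j, ∑ k, g φ j k * v j * v k) φd :=
      DifferentiableAt.fun_sum fun j _ => DifferentiableAt.fun_sum fun k _ =>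
        ((dcoord j φd).const_mul (g φ j k)).mul (dcoord k φd)
    have hps : pd i (fun v : Fin n → ℝ => ∑ j, ∑ k, g φ j k * v j * v k) φd
        = ∑ j, ∑ k, ((g φ j k * (if j = i then 1 else 0)) * φd k
            + (g φ j k * φd j) * (if k = i then 1 else 0)) := by
      refine (pd_sum univ _ (fun j _ => DifferentiableAt.fun_sum fun k _ =>
        ((dcoord j φd).const_mul (g φ j k)).mul (dcoord k φd))).trans ?_
      refine Finset.sum_congr rfl fun j _ => ?_
      refine (pd_sum univ _ (fun k _ =>
        ((dcoord j φd).const_mul (g φ j k)).fun_mul (dcoord k φd))).trans ?_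
      refine Finset.sum_congr rfl fun k _ => ?_
      rw [pd_mul ((dcoord j φd).const_mul (g φ j k)) (dcoord k φd),
        pd_const_mul (dcoord j φd), pd_coord, pd_coord]
    have hsum : ∑ j, ∑ k, ((g φ j k * (if j = i then 1 else 0)) * φd k
          + (g φ j k * φd j) * (if k = i then 1 else 0))
        = (∑ k, g φ i k * φd k) + (∑ j, g φ j i * φd j) := by
      simp only [Finset.sum_add_distrib]
      congr 1
      · have h1 : ∀ j : Fin n, ∑ k, (g φ j k * (if j = i then 1 else 0)) * φd k
            = if j = i then ∑ k, g φ j k * φd k else 0 := fun j => by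
          by_cases h : j = i <;> simp [h]
        rw [Finset.sum_congr rfl fun j _ => h1 j]
        simp [Finset.sum_ite_eq']
      · refine Finset.sum_congr rfl fun j _ => ?_
        simp [mul_ite, Finset.sum_ite_eq']
    have hsym2 : ∑ j, g φ j i * φd j = ∑ k, g φ i k * φd k :=
      Finset.sum_congr rfl fun j _ => by rw [hsym φ j i]
    calc pd i (fun v => minisuperL g V a ad φ v) φd
        = pd i (fun v : Fin n → ℝ => a^3 * ((-3*(ad/a)^2
            + (1/2)*(∑ j, ∑ k, g φ j k * v j * v k)) - V φ)) φd :=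
          pd_congr fun v => by simp only [minisuperL]
      _ = a^3 * pd i (fun v : Fin n → ℝ => (-3*(ad/a)^2
            + (1/2)*(∑ j, ∑ k, g φ j k * v j * v k)) - V φ) φd :=
          pd_const_mul (((differentiableAt_const _).fun_add (dsv.const_mul _)).fun_sub
            (differentiableAt_const _))
      _ = a^3 * ((1/2) * pd i (fun v : Fin n → ℝ => ∑ j, ∑ k, g φ j k * v j * v k) φd - 0) := by
          rw [pd_sub ((differentiableAt_const _).fun_add (dsv.const_mul _)) (differentiableAt_const _),
            pd_add (differentiableAt_const _) (dsv.const_mul _), pd_const, pd_const, zero_add,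
            pd_const_mul dsv]
      _ = a^3 * (∑ k, g φ i k * φd k) := by
          rw [hps, hsum, hsym2]; ring
  -- rewrite the goal
  rw [hD1, hD3, hD5]
  simp only [hD2, hD4, hD6, hD7, hD8]
  simp only [Xa, Xc]
  -- expand the two big sums
  have eT2 : ∑ i, (Y φ i - 4 / Real.sqrt a ^ 3 * ∑ j, ginv φ i j * pd j Λ φ)
        * (a^3*((1/2)*(∑ j, ∑ k, pd i (fun y => g y j k) φ * φd j * φd k) - pd i V φ))
      = a^3*((1/2)*(∑ i, Y φ i * (∑ j, ∑ k, pd i (fun y => g y j k) φ * φd j * φd k))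
            - ∑ i, Y φ i * pd i V φ)
        - (4 / Real.sqrt a ^ 3)*a^3
          *((1/2)*(∑ i, (∑ j, ginv φ i j * pd j Λ φ)
                * (∑ j, ∑ k, pd i (fun y => g y j k) φ * φd j * φd k))
            - ∑ i, (∑ j, ginv φ i j * pd j Λ φ) * pd i V φ) :=
    sum_expandT2 _ _ _ _ _ _
  have eT4 : ∑ i, ((-(4 * (-((3:ℕ) * Real.sqrt a ^ (3-1) * (1 / (2 * Real.sqrt a)))
          / (Real.sqrt a ^ 3) ^ 2))) * (∑ j, ginv φ i j * pd j Λ φ) * ad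
        + ∑ j, (pd j (fun y => Y y i) φ
            - (4 / Real.sqrt a ^ 3) * pd j (fun y => ∑ m, ginv y i m * pd m Λ y) φ) * φd j)
        * (a^3 * (∑ k, g φ i k * φd k))
      = (-(4 * (-((3:ℕ) * Real.sqrt a ^ (3-1) * (1 / (2 * Real.sqrt a)))
          / (Real.sqrt a ^ 3) ^ 2)))*ad*a^3
          *(∑ i, (∑ j, ginv φ i j * pd j Λ φ) * (∑ k, g φ i k * φd k))
        + a^3*(∑ i, (∑ j, pd j (fun y => Y y i) φ * φd j) * (∑ k, g φ i k * φd k))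
        - (4 / Real.sqrt a ^ 3)*a^3
          *(∑ i, (∑ j, pd j (fun y => ∑ m, ginv y i m * pd m Λ y) φ * φd j)
              * (∑ k, g φ i k * φd k)) :=
    sum_expandT4 _ _ _ _ _ _ _ _ _
  rw [eT2, eT4]
  -- the inner λ-sum
  have eT3 : ∑ i, (Real.sqrt a)⁻¹ * pd i Λ φ * φd i
      = (Real.sqrt a)⁻¹ * ∑ i, pd i Λ φ * φd i := by
    rw [Finset.mul_sum]; exact Finset.sum_congr rfl fun i _ => by ring
  rw [eT3]
  -- the four structural identities, contracted
  have hQ1 : ∑ i, Y φ i * (∑ j, ∑ k, pd i (fun y => g y j k) φ * φd j * φd k)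
      = -(2 * ∑ i, (∑ j, pd j (fun y => Y y i) φ * φd j) * (∑ k, g φ i k * φd k)) :=
    killing_contract (Y φ) φd (g φ) (fun l j k => pd l (fun y => g y j k) φ)
      (fun j i => pd j (fun y => Y y i) φ) (fun a b => hsym φ a b) hKillExp
  have hQ4 : ∑ i, (∑ j, pd j (fun y => ∑ m, ginv y i m * pd m Λ y) φ * φd j)
        * (∑ k, g φ i k * φd k)
      = (3/8)*(Λ φ)*(∑ j, ∑ k, g φ j k * φd j * φd k)
        - (1/2) * ∑ i, (∑ r, ginv φ i r * pd r Λ φ)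
            * (∑ j, ∑ k, pd i (fun y => g y j k) φ * φd j * φd k) :=
    hess_contract φd (fun l => ∑ r, ginv φ l r * pd r Λ φ) (Λ φ) (g φ)
      (fun l j k => pd l (fun y => g y j k) φ)
      (fun i j => pd j (fun y => ∑ m, ginv y i m * pd m Λ y) φ)
      (fun a b => hsym φ a b) hGd23 hI4
  have hGLG : ∑ i, (∑ j, ginv φ i j * pd j Λ φ) * (∑ k, g φ i k * φd k)
      = ∑ j, pd j Λ φ * φd j :=
    delta_contract (fun j => pd j Λ φ) φd (g φ) (ginv φ)
      (fun j k => by rw [Finset.sum_congr rfl fun i (_ : i ∈ univ) => by rw [hgis φ i j]]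
                     exact hinv φ j k)
  have hS1 : ∑ i, Y φ i * pd i V φ = 0 := hYV φ
  have hS2 : ∑ i, (∑ j, ginv φ i j * pd j Λ φ) * pd i V φ = (3/4) * V φ * Λ φ := by
    rw [← hContr φ]
    refine Finset.sum_congr rfl fun i _ => ?_
    rw [Finset.sum_mul]
    exact Finset.sum_congr rfl fun j _ => by ring
  rw [hQ1, hQ4, hGLG, hS1, hS2]
  -- now a pure scalar identity
  obtain ⟨s, hs0, rfl⟩ : ∃ s : ℝ, 0 < s ∧ a = s^2 :=
    ⟨Real.sqrt a, hsa, (Real.sq_sqrt ha.le).symm⟩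
  rw [Real.sqrt_sq hs0.le]
  field_simp
  ring
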